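/- For every y ∈ ℝ^Q and λ > 0, there exists a solution x⋆ of (P_λ(y)) whose D-cosupport J satisfies (H_J): Ker Φ ∩ G_J = {0}. -/

import Mathlib

open Matrix MeasureTheory ProbabilityTheory

/-- The analysis lasso objective `L_{y,λ}(x) = (1/2)‖y − Φx‖₂² + λ‖D*x‖₁`. -/
noncomputable def lassoObj {N Q P : ℕ} (Φ : Matrix (Fin Q) (Fin N) ℝ)
    (D : Matrix (Fin N) (Fin P) ℝ) (y : Fin Q → ℝ) (lam : ℝ) (x : Fin N → ℝ) : ℝ :=
  (1 / 2) * ∑ i, (y i - Φ.mulVec x i) ^ 2 + lam * ∑ j, |Dᵀ.mulVec x j|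

/-- `x` is a solution of `(P_λ(y))`, i.e. a global minimizer of the lasso objective. -/
def IsLassoSol {N Q P : ℕ} (Φ : Matrix (Fin Q) (Fin N) ℝ)
    (D : Matrix (Fin N) (Fin P) ℝ) (y : Fin Q → ℝ) (lam : ℝ) (x : Fin N → ℝ) : Prop :=
  ∀ x' : Fin N → ℝ, lassoObj Φ D y lam x ≤ lassoObj Φ D y lam x'

/-- The cospace `G_J = Ker D_J^*`. -/
def GJ {N P : ℕ} (D : Matrix (Fin N) (Fin P) ℝ) (J : Set (Fin P)) :
    Submodule ℝ (Fin N → ℝ) where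
  carrier := {x | ∀ j ∈ J, Dᵀ.mulVec x j = 0}
  add_mem' := by
    intro a b ha hb j hj
    simp [Matrix.mulVec_add, ha j hj, hb j hj]
  zero_mem' := by intro j hj; simp
  smul_mem' := by
    intro c a ha j hj
    simp [Matrix.mulVec_smul, ha j hj]

/-- Condition `(H_J)`: `Ker Φ ∩ G_J = {0}`. -/
def HJcond {N Q P : ℕ} (Φ : Matrix (Fin Q) (Fin N) ℝ) (D : Matrix (Fin N) (Fin P) ℝ)
    (J : Set (Fin P)) : Prop :=
  ∀ x : Fin N → ℝ, Φ.mulVec x = 0 → x ∈ GJ D J → x = 0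

/-!
Under `(H₀)` the map `x ↦ (Φx, D*x)` is injective, so the objective is coercive and has a
minimizer. Take a minimizer `x⋆` whose `D`-support is as small as possible. If `(H_J)` failed,
there would be `v ≠ 0` with `Φv = 0` and `D*v` vanishing on the cosupport of `x⋆`. Along the
line `x⋆ + tv` the data term is constant and `‖D*(x⋆ + tv)‖₁` is affine in `t` up to its first
breakpoint `T` on either side of `0`; minimality at `t = 0` forces the slope to vanish, so
`x⋆ + Tv` is again a minimizer, with strictly smaller `D`-support.
-/

open Function Bornology Metric

theorem abs_add_eq_of_abs_le {a c : ℝ} (h : |c| ≤ |a|) : |a + c| = |a| + c * Real.sign a := by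
  rcases lt_trichotomy a 0 with ha | rfl | ha
  · rw [abs_of_neg ha] at h
    rw [abs_of_nonpos (by linarith [le_abs_self c]), abs_of_neg ha, Real.sign_of_neg ha]; ring
  · simp_all
  · rw [abs_of_pos ha] at h
    rw [abs_of_nonneg (by linarith [neg_abs_le c]), abs_of_pos ha, Real.sign_of_pos ha]; ring

theorem sum_abs_add_eq_of_abs_le {ι : Type*} [Fintype ι] {a c : ι → ℝ}
    (h : ∀ j, |c j| ≤ |a j|) :
    ∑ j, |a j + c j| = ∑ j, |a j| + ∑ j, c j * Real.sign (a j) := by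
  rw [← Finset.sum_add_distrib]
  exact Finset.sum_congr rfl fun j _ => abs_add_eq_of_abs_le (h j)

theorem exists_support_ssubset_of_sum_abs_le {ι : Type*} [Fintype ι] {a b : ι → ℝ}
    (hb : b ≠ 0) (hba : support b ⊆ support a)
    (hmin : ∀ t : ℝ, ∑ j, |a j| ≤ ∑ j, |a j + t * b j|) :
    ∃ t : ℝ, ∑ j, |a j + t * b j| = ∑ j, |a j| ∧
      support (fun j => a j + t * b j) ⊂ support a := by
  classical
  obtain ⟨j₁, hj₁⟩ := Function.ne_iff.1 hb
  obtain ⟨j₀, hj₀, hmin₀⟩ := Finset.exists_min_image (Finset.univ.filter fun j => b j ≠ 0)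
    (fun j => |a j / b j|) ⟨j₁, by simpa using hj₁⟩
  simp only [Finset.mem_filter, Finset.mem_univ, true_and] at hj₀ hmin₀
  -- `T` is a breakpoint of `t ↦ ∑ j, |a j + t * b j|` of least modulus.
  set T := -(a j₀ / b j₀)
  have hT : ∀ j, |T * b j| ≤ |a j| := by
    intro j
    by_cases hbj : b j = 0
    · simp [hbj]
    · calc |T * b j| = |T| * |b j| := abs_mul _ _
        _ ≤ |a j / b j| * |b j| :=
          mul_le_mul_of_nonneg_right (by rw [abs_neg]; exact hmin₀ j hbj) (abs_nonneg _)
        _ = |a j| := by rw [abs_div, div_mul_cancel₀ _ (abs_ne_zero.2 hbj)]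
  set s := ∑ j, b j * Real.sign (a j)
  have hline : ∀ t, (∀ j, |t * b j| ≤ |a j|) → ∑ j, |a j + t * b j| = ∑ j, |a j| + t * s := by
    intro t ht
    rw [sum_abs_add_eq_of_abs_le ht, Finset.mul_sum]
    simp only [mul_assoc]
  have hTs : T * s = 0 := by
    have h₁ := hmin T
    have h₂ := hmin (-T)
    rw [hline T hT] at h₁
    rw [hline (-T) fun j => by simpa only [neg_mul, abs_neg] using hT j, neg_mul] at h₂
    linarith
  refine ⟨T, by rw [hline T hT, hTs, add_zero], ?_⟩
  refine (Set.ssubset_iff_of_subset fun j hj => ?_).2 ⟨j₀, hba hj₀, ?_⟩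
  · by_contra haj
    have hbj : b j = 0 := by_contra fun hbj => haj (hba hbj)
    simp_all
  · simp [T, div_mul_cancel₀ _ hj₀]

section Lasso

variable {N Q P : ℕ} {Φ : Matrix (Fin Q) (Fin N) ℝ} {D : Matrix (Fin N) (Fin P) ℝ}
  {y : Fin Q → ℝ} {lam : ℝ}

theorem continuous_lassoObj : Continuous (lassoObj Φ D y lam) := by
  unfold lassoObj; fun_prop

theorem isBounded_setOf_lassoObj_le (hH0 : ∀ x : Fin N → ℝ, Φ *ᵥ x = 0 → Dᵀ *ᵥ x = 0 → x = 0)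
    (hlam : 0 < lam) (c : ℝ) : IsBounded {x | lassoObj Φ D y lam x ≤ c} := by
  let f := Φ.mulVecLin.prod Dᵀ.mulVecLin
  obtain ⟨K, -, hK⟩ := f.exists_antilipschitzWith <| LinearMap.ker_eq_bot'.2 fun x hx =>
    hH0 x (congrArg Prod.fst hx) (congrArg Prod.snd hx)
  have hB : IsBounded (closedBall y √(2 * c) ×ˢ closedBall (0 : Fin P → ℝ) (c / lam)) :=
    isBounded_closedBall.prod isBounded_closedBall
  refine (hK.isBounded_preimage hB).subset fun x hx => ?_
  have hsq : 0 ≤ ∑ i, (y i - (Φ *ᵥ x) i) ^ 2 := by positivity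
  have habs : 0 ≤ ∑ j, |(Dᵀ *ᵥ x) j| := by positivity
  have hx : (1 / 2) * ∑ i, (y i - (Φ *ᵥ x) i) ^ 2 + lam * ∑ j, |(Dᵀ *ᵥ x) j| ≤ c := hx
  have hc : 0 ≤ c := by nlinarith
  change dist (Φ *ᵥ x) y ≤ √(2 * c) ∧ dist (Dᵀ *ᵥ x) 0 ≤ c / lam
  refine ⟨(dist_pi_le_iff (by positivity)).2 fun i => ?_,
    (dist_pi_le_iff (by positivity)).2 fun j => ?_⟩
  · rw [Real.dist_eq, abs_sub_comm]
    refine Real.abs_le_sqrt ?_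
    nlinarith [Finset.single_le_sum (fun i _ => sq_nonneg (y i - (Φ *ᵥ x) i)) (Finset.mem_univ i)]
  · rw [Pi.zero_apply, dist_zero_right, Real.norm_eq_abs, le_div_iff₀ hlam]
    nlinarith [Finset.single_le_sum (fun j _ => abs_nonneg ((Dᵀ *ᵥ x) j)) (Finset.mem_univ j)]

theorem exists_isLassoSol (hH0 : ∀ x : Fin N → ℝ, Φ *ᵥ x = 0 → Dᵀ *ᵥ x = 0 → x = 0)
    (hlam : 0 < lam) : ∃ x, IsLassoSol Φ D y lam x :=
  continuous_lassoObj.exists_forall_le_of_isBounded 0 (isBounded_setOf_lassoObj_le hH0 hlam _)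

theorem lassoObj_add_smul_of_mulVec_eq_zero {x v : Fin N → ℝ} (hv : Φ *ᵥ v = 0) (t : ℝ) :
    lassoObj Φ D y lam (x + t • v) = lassoObj Φ D y lam x - lam * ∑ j, |(Dᵀ *ᵥ x) j| +
      lam * ∑ j, |(Dᵀ *ᵥ x) j + t * (Dᵀ *ᵥ v) j| := by
  simp only [lassoObj, mulVec_add, mulVec_smul, hv, smul_zero, add_zero, Pi.add_apply,
    Pi.smul_apply, Pi.zero_apply, smul_eq_mul]
  ring

theorem IsLassoSol.exists_support_ssubset (hlam : 0 < lam) {xs v : Fin N → ℝ}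
    (hxs : IsLassoSol Φ D y lam xs) (hv : Φ *ᵥ v = 0)
    (hvG : v ∈ GJ D {j | (Dᵀ *ᵥ xs) j = 0}) (hb : Dᵀ *ᵥ v ≠ 0) :
    ∃ x, IsLassoSol Φ D y lam x ∧ support (Dᵀ *ᵥ x) ⊂ support (Dᵀ *ᵥ xs) := by
  have hba : support (Dᵀ *ᵥ v) ⊆ support (Dᵀ *ᵥ xs) := fun j hj => mt (hvG j) hj
  have hmin : ∀ t : ℝ, ∑ j, |(Dᵀ *ᵥ xs) j| ≤ ∑ j, |(Dᵀ *ᵥ xs) j + t * (Dᵀ *ᵥ v) j| := by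
    intro t
    have h := hxs (xs + t • v)
    rw [lassoObj_add_smul_of_mulVec_eq_zero hv] at h
    exact le_of_mul_le_mul_left (by linarith) hlam
  obtain ⟨t, heq, hsupp⟩ := exists_support_ssubset_of_sum_abs_le hb hba hmin
  have hDx : Dᵀ *ᵥ (xs + t • v) = fun j => (Dᵀ *ᵥ xs) j + t * (Dᵀ *ᵥ v) j := by
    ext j; simp [mulVec_add, mulVec_smul]
  refine ⟨xs + t • v, fun x' => ?_, hDx ▸ hsupp⟩
  rw [lassoObj_add_smul_of_mulVec_eq_zero hv, heq, sub_add_cancel]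
  exact hxs x'

end Lasso

theorem lasso_exists_sol_HJ_general
    {N Q P : ℕ}
    (Φ : Matrix (Fin Q) (Fin N) ℝ) (D : Matrix (Fin N) (Fin P) ℝ)
    (hH0 : ∀ x : Fin N → ℝ, Φ.mulVec x = 0 → Dᵀ.mulVec x = 0 → x = 0)
    (y : Fin Q → ℝ) (lam : ℝ) (hlam : 0 < lam) :
    ∃ xs : Fin N → ℝ, IsLassoSol Φ D y lam xs ∧
      HJcond Φ D {j | Dᵀ.mulVec xs j = 0} := by
  obtain ⟨x₀, hx₀⟩ := exists_isLassoSol (y := y) hH0 hlam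
  obtain ⟨xs, hxs, hleast⟩ := (measure fun x => (support (Dᵀ *ᵥ x)).ncard).wf.has_min
    {x | IsLassoSol Φ D y lam x} ⟨x₀, hx₀⟩
  refine ⟨xs, hxs, fun v hv hvG => by_contra fun hv0 => ?_⟩
  obtain ⟨x, hx, hlt⟩ := hxs.exists_support_ssubset hlam hv hvG fun h => hv0 (hH0 v hv h)
  exact hleast x hx (Set.ncard_lt_ncard hlt)

/-- There always exists a solution of `(P_λ(y))` whose `D`-cosupport `J` satisfies
`(H_J)`: `Ker Φ ∩ G_J = {0}`. -/
theorem lasso_exists_sol_HJ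
    {N Q P : ℕ} (hN : 0 < N) (hQ : 0 < Q) (hP : 0 < P)
    (Φ : Matrix (Fin Q) (Fin N) ℝ) (D : Matrix (Fin N) (Fin P) ℝ)
    (hH0 : ∀ x : Fin N → ℝ, Φ.mulVec x = 0 → Dᵀ.mulVec x = 0 → x = 0)
    (y : Fin Q → ℝ) (lam : ℝ) (hlam : 0 < lam) :
    ∃ xs : Fin N → ℝ, IsLassoSol Φ D y lam xs ∧
      HJcond Φ D {j | Dᵀ.mulVec xs j = 0} :=
  lasso_exists_sol_HJ_general Φ D hH0 y lam hlam
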